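/- The (n+1)-dimensional algebra with products [e_i,e_1]=e_{i+1} (1 ≤ i ≤ n-2), [e_n,e_1]=e_2, [e_1,e_n]=α_3 e_{n+1}, [e_n,e_n]=α_3 e_{n+1} with α_3 ≠ 0 is isomorphic to the algebra L_{n+1}^1 with products [e_i,e_1]=e_{i+1} (1 ≤ i ≤ n-2), [e_1,e_n]=e_{n+1}+e_2, [e_i,e_n]=e_{i+1} (2 ≤ i ≤ n-2). -/
import Mathlib


/-- The `(n+1)`-dimensional algebra with products `[e_i,e_1]=e_{i+1}`
(`1 ≤ i ≤ n-2`), `[e_n,e_1]=e_2`, `[e_1,e_n]=α_3 e_{n+1}`,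
`[e_n,e_n]=α_3 e_{n+1}`, other products zero. -/
def Amul (n : ℕ) (hn : 4 ≤ n) (α3 : ℂ) (x y : Fin (n+1) → ℂ) :
    Fin (n+1) → ℂ :=
  fun k =>
    if h : (k : ℕ) = 1 then
      x ⟨0, by omega⟩ * y ⟨0, by omega⟩ + x ⟨n - 1, by omega⟩ * y ⟨0, by omega⟩
    else if h2 : 2 ≤ (k : ℕ) ∧ (k : ℕ) ≤ n - 2 then
      x ⟨(k : ℕ) - 1, by have := k.isLt; omega⟩ * y ⟨0, by omega⟩
    else if h3 : (k : ℕ) = n then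
      α3 * (x ⟨0, by omega⟩ * y ⟨n - 1, by omega⟩) +
        α3 * (x ⟨n - 1, by omega⟩ * y ⟨n - 1, by omega⟩)
    else 0

/-- The algebra `L_{n+1}^1`: `[e_i,e_1]=e_{i+1}` (`1 ≤ i ≤ n-2`),
`[e_1,e_n]=e_{n+1}+e_2`, `[e_i,e_n]=e_{i+1}` (`2 ≤ i ≤ n-2`). -/
def L1mul (n : ℕ) (hn : 4 ≤ n) (x y : Fin (n+1) → ℂ) : Fin (n+1) → ℂ :=
  fun k =>
    if h : (k : ℕ) = 1 then
      x ⟨0, by omega⟩ * y ⟨0, by omega⟩ + x ⟨0, by omega⟩ * y ⟨n - 1, by omega⟩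
    else if h2 : 2 ≤ (k : ℕ) ∧ (k : ℕ) ≤ n - 2 then
      x ⟨(k : ℕ) - 1, by have := k.isLt; omega⟩ * y ⟨0, by omega⟩ +
        x ⟨(k : ℕ) - 1, by have := k.isLt; omega⟩ * y ⟨n - 1, by omega⟩
    else if h3 : (k : ℕ) = n then
      x ⟨0, by omega⟩ * y ⟨n - 1, by omega⟩
    else 0

section Aux

variable (n : ℕ) (hn : 4 ≤ n) (α3 c : ℂ) (x y z : Fin (n+1) → ℂ)
  (k : Fin (n+1))

lemma Amul_one (hk : (k : ℕ) = 1) :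
    Amul n hn α3 x y k
      = x ⟨0, by omega⟩ * y ⟨0, by omega⟩
        + x ⟨n - 1, by omega⟩ * y ⟨0, by omega⟩ := by
  simp only [Amul]; rw [dif_pos hk]

lemma Amul_mid (hk : 2 ≤ (k : ℕ) ∧ (k : ℕ) ≤ n - 2) :
    Amul n hn α3 x y k
      = x ⟨(k : ℕ) - 1, by have := k.isLt; omega⟩ * y ⟨0, by omega⟩ := by
  simp only [Amul]; rw [dif_neg (by omega), dif_pos hk]

lemma Amul_last (hk : (k : ℕ) = n) :
    Amul n hn α3 x y k
      = α3 * (x ⟨0, by omega⟩ * y ⟨n - 1, by omega⟩) +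
        α3 * (x ⟨n - 1, by omega⟩ * y ⟨n - 1, by omega⟩) := by
  simp only [Amul]
  rw [dif_neg (by omega), dif_neg (by omega), dif_pos hk]

lemma Amul_other (hk : (k : ℕ) = 0 ∨ (k : ℕ) = n - 1) :
    Amul n hn α3 x y k = 0 := by
  simp only [Amul]
  rw [dif_neg (by omega), dif_neg (by omega), dif_neg (by omega)]

lemma L1mul_one (hk : (k : ℕ) = 1) :
    L1mul n hn x y k
      = x ⟨0, by omega⟩ * y ⟨0, by omega⟩
        + x ⟨0, by omega⟩ * y ⟨n - 1, by omega⟩ := by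
  simp only [L1mul]; rw [dif_pos hk]

lemma L1mul_mid (hk : 2 ≤ (k : ℕ) ∧ (k : ℕ) ≤ n - 2) :
    L1mul n hn x y k
      = x ⟨(k : ℕ) - 1, by have := k.isLt; omega⟩ * y ⟨0, by omega⟩ +
        x ⟨(k : ℕ) - 1, by have := k.isLt; omega⟩ * y ⟨n - 1, by omega⟩ := by
  simp only [L1mul]; rw [dif_neg (by omega), dif_pos hk]

lemma L1mul_last (hk : (k : ℕ) = n) :
    L1mul n hn x y k = x ⟨0, by omega⟩ * y ⟨n - 1, by omega⟩ := by
  simp only [L1mul]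
  rw [dif_neg (by omega), dif_neg (by omega), dif_pos hk]

lemma L1mul_other (hk : (k : ℕ) = 0 ∨ (k : ℕ) = n - 1) :
    L1mul n hn x y k = 0 := by
  simp only [L1mul]
  rw [dif_neg (by omega), dif_neg (by omega), dif_neg (by omega)]

end Aux

/-- The change-of-basis map: `z₀ ↦ z₀ + z_{n-1}`, `z_{n-1} ↦ -z_{n-1}`,
`zₙ ↦ c·zₙ`, identity on the other coordinates. -/
def Fmap (n : ℕ) (hn : 4 ≤ n) (c : ℂ) (z : Fin (n+1) → ℂ) :
    Fin (n+1) → ℂ :=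
  fun k =>
    if (k : ℕ) = 0 then z ⟨0, by omega⟩ + z ⟨n - 1, by omega⟩
    else if (k : ℕ) = n - 1 then -z k
    else if (k : ℕ) = n then c * z k
    else z k

lemma Fmap_zero (n : ℕ) (hn : 4 ≤ n) (c : ℂ) (z : Fin (n+1) → ℂ)
    (k : Fin (n+1)) (hk : (k : ℕ) = 0) :
    Fmap n hn c z k = z ⟨0, by omega⟩ + z ⟨n - 1, by omega⟩ := by
  simp [Fmap, hk]

lemma Fmap_mid (n : ℕ) (hn : 4 ≤ n) (c : ℂ) (z : Fin (n+1) → ℂ)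
    (k : Fin (n+1)) (hk : 1 ≤ (k : ℕ) ∧ (k : ℕ) ≤ n - 2) :
    Fmap n hn c z k = z k := by
  simp only [Fmap]
  rw [if_neg (by omega), if_neg (by omega), if_neg (by omega)]

lemma Fmap_pen (n : ℕ) (hn : 4 ≤ n) (c : ℂ) (z : Fin (n+1) → ℂ)
    (k : Fin (n+1)) (hk : (k : ℕ) = n - 1) :
    Fmap n hn c z k = -z k := by
  simp only [Fmap]
  rw [if_neg (by omega), if_pos hk]

lemma Fmap_last (n : ℕ) (hn : 4 ≤ n) (c : ℂ) (z : Fin (n+1) → ℂ)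
    (k : Fin (n+1)) (hk : (k : ℕ) = n) :
    Fmap n hn c z k = c * z k := by
  simp only [Fmap]
  rw [if_neg (by omega), if_neg (by omega), if_pos hk]

/-- `Fmap` as a linear map. -/
def Flin (n : ℕ) (hn : 4 ≤ n) (c : ℂ) :
    (Fin (n+1) → ℂ) →ₗ[ℂ] (Fin (n+1) → ℂ) where
  toFun := Fmap n hn c
  map_add' x y := by
    funext k
    simp only [Fmap, Pi.add_apply]
    split_ifs <;> ring
  map_smul' a x := by
    funext k
    simp only [Fmap, Pi.smul_apply, RingHom.id_apply, smul_eq_mul]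
    split_ifs <;> ring

lemma Fmap_Fmap (n : ℕ) (hn : 4 ≤ n) (c c' : ℂ) (hcc : c * c' = 1)
    (z : Fin (n+1) → ℂ) : Fmap n hn c (Fmap n hn c' z) = z := by
  funext k
  by_cases h0 : (k : ℕ) = 0
  · rw [Fmap_zero n hn c _ k h0,
      Fmap_zero n hn c' z ⟨0, by omega⟩ (by simp),
      Fmap_pen n hn c' z ⟨n - 1, by omega⟩ (by simp)]
    have : k = ⟨0, by omega⟩ := Fin.ext h0
    rw [this]; ring
  · by_cases h1 : (k : ℕ) = n - 1
    · rw [Fmap_pen n hn c _ k h1, Fmap_pen n hn c' z k h1]; ring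
    · by_cases h2 : (k : ℕ) = n
      · rw [Fmap_last n hn c _ k h2, Fmap_last n hn c' z k h2,
          ← mul_assoc, hcc, one_mul]
      · have hk : 1 ≤ (k : ℕ) ∧ (k : ℕ) ≤ n - 2 := by
          have := k.isLt; omega
        rw [Fmap_mid n hn c _ k hk, Fmap_mid n hn c' z k hk]

/-- For `α_3 ≠ 0` the first algebra is isomorphic to `L_{n+1}^1`. -/
theorem A_iso_L1 (n : ℕ) (hn : 4 ≤ n) (α3 : ℂ) (hα3 : α3 ≠ 0) :
    ∃ f : (Fin (n+1) → ℂ) ≃ₗ[ℂ] (Fin (n+1) → ℂ),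
      ∀ x y, f (Amul n hn α3 x y) = L1mul n hn (f x) (f y) := by
  have hcc : (-(α3⁻¹)) * (-α3) = 1 := by field_simp
  have hcc' : (-α3) * (-(α3⁻¹)) = 1 := by field_simp
  refine ⟨LinearEquiv.ofLinear (Flin n hn (-(α3⁻¹))) (Flin n hn (-α3))
    (LinearMap.ext fun z => Fmap_Fmap n hn _ _ hcc z)
    (LinearMap.ext fun z => Fmap_Fmap n hn _ _ hcc' z), ?_⟩
  intro x y
  simp only [LinearEquiv.ofLinear_apply]
  show Fmap n hn _ (Amul n hn α3 x y)
      = L1mul n hn (Fmap n hn _ x) (Fmap n hn _ y)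
  funext k
  have hx0 := Fmap_zero n hn (-(α3⁻¹)) x ⟨0, by omega⟩ (by simp)
  have hy0 := Fmap_zero n hn (-(α3⁻¹)) y ⟨0, by omega⟩ (by simp)
  have hxp := Fmap_pen n hn (-(α3⁻¹)) x ⟨n - 1, by omega⟩ (by simp)
  have hyp := Fmap_pen n hn (-(α3⁻¹)) y ⟨n - 1, by omega⟩ (by simp)
  by_cases h1 : (k : ℕ) = 1
  · rw [Fmap_mid n hn _ _ k ⟨by omega, by omega⟩,
      Amul_one n hn α3 x y k h1, L1mul_one n hn _ _ k h1, hx0, hy0, hyp]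
    ring
  · by_cases h2 : 2 ≤ (k : ℕ) ∧ (k : ℕ) ≤ n - 2
    · rw [Fmap_mid n hn _ _ k ⟨by omega, by omega⟩,
        Amul_mid n hn α3 x y k h2, L1mul_mid n hn _ _ k h2, hy0, hyp,
        Fmap_mid n hn (-(α3⁻¹)) x ⟨(k : ℕ) - 1, by have := k.isLt; omega⟩
          ⟨by simpa using by omega, by simpa using by omega⟩]
      ring
    · by_cases h3 : (k : ℕ) = n - 1
      · rw [Fmap_pen n hn _ _ k h3, Amul_other n hn α3 x y k (Or.inr h3),
          L1mul_other n hn _ _ k (Or.inr h3)]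
        ring
      · by_cases h4 : (k : ℕ) = n
        · rw [Fmap_last n hn _ _ k h4, Amul_last n hn α3 x y k h4,
            L1mul_last n hn _ _ k h4, hx0, hyp]
          field_simp
        · have h0 : (k : ℕ) = 0 := by have := k.isLt; omega
          rw [Fmap_zero n hn _ _ k h0,
            Amul_other n hn α3 x y ⟨0, by omega⟩ (Or.inl (by simp)),
            Amul_other n hn α3 x y ⟨n - 1, by omega⟩ (Or.inr (by simp)),
            L1mul_other n hn _ _ k (Or.inl h0)]
          ring
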